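/- Let n = 3 and let a ∈ E¹ with a ∉ C_{1,2} ∪ C_{1,3} ∪ C_{2,3} ∪ C_{1,2,3}. Then the map ψ_a : I² → E³, x ↦ a·x, is injective, where I² = I ∩ E²; consequently a does not lie in the first resonance variety R¹ of A = E/I. -/

import Mathlib

noncomputable section

open ExteriorAlgebra

/-- Index set for the generators `e_{p,q}`, `p ≠ q`, of the exterior algebra `E`. -/
abbrev RIdx (n : ℕ) := {pq : Fin n × Fin n // pq.1 ≠ pq.2}

/-- The exterior algebra `E` on the vector space with basis `{e_{p,q} : p ≠ q}`. -/
abbrev Egen (k : Type) [Field k] (n : ℕ) := ExteriorAlgebra k (RIdx n →₀ k)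

/-- The degree-one generator `e_{p,q}` of `E`. -/
def egen (k : Type) [Field k] {n : ℕ} (p q : Fin n) (h : p ≠ q) : Egen k n :=
  ExteriorAlgebra.ι k (Finsupp.single (⟨(p, q), h⟩ : RIdx n) (1 : k))

/-- The degree-one generator `e_{p,q}` indexed by an element of `RIdx n`. -/
def egen' (k : Type) [Field k] {n : ℕ} (x : RIdx n) : Egen k n :=
  ExteriorAlgebra.ι k (Finsupp.single x (1 : k))

/-- The generators `η_{i,j} = e_{i,j} e_{j,i}` (for `i < j`) and
`τ^m_{i,j} = (e_{m,i} - e_{j,i})(e_{m,j} - e_{i,j})` (for `i < j`, `m ∉ {i,j}`)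
of the ideal `I`. -/
def resGens (k : Type) [Field k] (n : ℕ) : Set (Egen k n) :=
  {x | ∃ (i j : Fin n) (hij : i < j),
      x = egen k i j hij.ne * egen k j i hij.ne'} ∪
  {x | ∃ (i j m : Fin n) (hij : i < j) (hmi : m ≠ i) (hmj : m ≠ j),
      x = (egen k m i hmi - egen k j i hij.ne') * (egen k m j hmj - egen k i j hij.ne)}

/-- The two-sided ideal `I` of `E` generated by the `η`'s and `τ`'s. -/
def resIdeal (k : Type) [Field k] (n : ℕ) : TwoSidedIdeal (Egen k n) :=
  TwoSidedIdeal.span (resGens k n)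

/-- The quotient algebra `A = E/I`, i.e. `H^*(PΣ_n; k)`. -/
abbrev resA (k : Type) [Field k] (n : ℕ) := (resIdeal k n).ringCon.Quotient

/-- The quotient map `π : E → A = E/I` as a `k`-algebra homomorphism. -/
def resπ (k : Type) [Field k] (n : ℕ) : Egen k n →ₐ[k] resA k n :=
  { (resIdeal k n).ringCon.mk' with commutes' := fun _ => rfl }

/-- The degree-`m` graded piece `A^m` of `A = E/I`: the image of `E^m = ⋀^m` in `A`. -/
def resAmod (k : Type) [Field k] (n : ℕ) (m : ℕ) : Submodule k (resA k n) :=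
  Submodule.map (resπ k n).toLinearMap (⋀[k]^m (RIdx n →₀ k))

/-- The first resonance variety `R¹ = {a ∈ A¹ : H¹(A, δ_a) ≠ 0}`:  `H¹(A,δ_a) ≠ 0` iff some
`x ∈ A¹ = ker(δ_a : A¹ → A²)`-element with `a·x = 0` is not in the image of `δ_a : A⁰ → A¹`. -/
def resR1 (k : Type) [Field k] (n : ℕ) : Set (resA k n) :=
  {a | a ∈ resAmod k n 1 ∧
    ∃ x ∈ resAmod k n 1, a * x = 0 ∧
      x ∉ Submodule.map (LinearMap.mulLeft k a) (resAmod k n 0)}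

/-- The subspace `C_{i,j} = span{e_{i,j}, e_{j,i}}` of `A¹`. -/
def resC2 (k : Type) [Field k] (n : ℕ) (i j : Fin n) (hij : i ≠ j) :
    Submodule k (resA k n) :=
  Submodule.span k {resπ k n (egen k i j hij), resπ k n (egen k j i hij.symm)}

/-- The subspace `C_{i,j,m} = span{e_{j,i} − e_{m,i}, e_{i,j} − e_{m,j}, e_{i,m} − e_{j,m}}`
of `A¹`. -/
def resC3 (k : Type) [Field k] (n : ℕ) (i j m : Fin n)
    (hij : i ≠ j) (him : i ≠ m) (hjm : j ≠ m) : Submodule k (resA k n) :=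
  Submodule.span k {resπ k n (egen k j i hij.symm - egen k m i him.symm),
                    resπ k n (egen k i j hij - egen k m j hjm.symm),
                    resπ k n (egen k i m him - egen k j m hjm)}

/-- The two-sided ideal `I`, viewed as a `k`-subspace of `E`. -/
def resIdealSub (k : Type) [Field k] (n : ℕ) : Submodule k (Egen k n) where
  carrier := resIdeal k n
  add_mem' := (resIdeal k n).add_mem
  zero_mem' := (resIdeal k n).zero_mem
  smul_mem' c x hx := by
    have h := (resIdeal k n).mul_mem_left (algebraMap k (Egen k n) c) x hx
    simpa [Algebra.smul_def] using h

/-- The degree-two part `I² = I ∩ E²` of the ideal `I`, as a `k`-subspace of `E`. -/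
def resI2 (k : Type) [Field k] (n : ℕ) : Submodule k (Egen k n) :=
  resIdealSub k n ⊓ ⋀[k]^2 (RIdx n →₀ k)

/-- The map `ψ_a : I² → E` (with image in `E³` when `a ∈ E¹`), `x ↦ a·x`. -/
def resPsi (k : Type) [Field k] (n : ℕ) (a : Egen k n) : resI2 k n →ₗ[k] Egen k n :=
  (LinearMap.mulLeft k a).comp (resI2 k n).subtype

end
/-- The subspace `C_{i,j} = span{e_{i,j}, e_{j,i}}` of `E¹ = A¹`. -/
noncomputable def resC2E (k : Type) [Field k] (n : ℕ) (i j : Fin n) (hij : i ≠ j) :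
    Submodule k (Egen k n) :=
  Submodule.span k {egen k i j hij, egen k j i hij.symm}

/-- The subspace `C_{i,j,m} = span{e_{j,i} − e_{m,i}, e_{i,j} − e_{m,j}, e_{i,m} − e_{j,m}}`
of `E¹ = A¹`. -/
noncomputable def resC3E (k : Type) [Field k] (n : ℕ) (i j m : Fin n)
    (hij : i ≠ j) (him : i ≠ m) (hjm : j ≠ m) : Submodule k (Egen k n) :=
  Submodule.span k {egen k j i hij.symm - egen k m i him.symm,
                    egen k i j hij - egen k m j hjm.symm,
                    egen k i m him - egen k j m hjm}

/-!
The ideal `I` is generated by the six quadrics `η_{i,j}`, `τ^m_{i,j}`, so its degree-two part `I²`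
is their span. Write `a = ι v` and `x = ∑ cᵢ gᵢ ∈ I²`; the coordinates of `a·x ∈ E³` along triples
of basis vectors are 3 × 3 minors, bilinear in `v` and `c`. Each `τ`-coefficient is annihilated by
two of the sums `v₂₁ + v₃₁`, `v₁₂ + v₃₂`, `v₁₃ + v₂₃` and, through one more minor, by the third;
these vanish together exactly on `C_{1,2,3}`. Once the `τ`-coefficients are zero, the
`η_{i,j}`-coefficient is annihilated by every coordinate of `v` outside `C_{i,j}`. So `a·x = 0`
forces `x = 0`.

For `a ∉ R¹`: if `π a · π y = 0` with `y ∈ E¹`, then `a·y ∈ I²` and `ψ_a (a·y) = a²·y = 0`, so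
`a·y = 0`, `y` is a multiple of `a`, and `π y` lies in the image of `δ_a : A⁰ → A¹`.
-/

open ExteriorAlgebra

namespace ExteriorAlgebra

variable {R M : Type*} [CommRing R] [AddCommGroup M] [Module R M]

def detPairing {n : ℕ} (f : Fin n → Module.Dual R M) : ExteriorAlgebra R M →ₗ[R] R :=
  liftAlternating (Pi.single n (Matrix.detRowAlternating.compLinearMap (LinearMap.pi f)))

theorem detPairing_ιMulti {n : ℕ} (f : Fin n → Module.Dual R M) (m : Fin n → M) :
    detPairing f (ιMulti R n m) = (Matrix.of fun i j => f j (m i)).det := by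
  rw [detPairing, liftAlternating_apply_ιMulti, Pi.single_eq_same]
  rfl

theorem detPairing_ι_mul_ι (f : Fin 2 → Module.Dual R M) (x y : M) :
    detPairing f (ι R x * ι R y) = f 0 x * f 1 y - f 1 x * f 0 y := by
  have : ι R x * ι R y = ιMulti R 2 ![x, y] := by simp [ιMulti_apply]
  rw [this, detPairing_ιMulti, Matrix.det_fin_two]
  simp

theorem detPairing_ι_mul_ι_mul_ι (f : Fin 3 → Module.Dual R M) (x y z : M) :
    detPairing f (ι R x * (ι R y * ι R z)) =
      f 0 x * (f 1 y * f 2 z - f 2 y * f 1 z) - f 1 x * (f 0 y * f 2 z - f 2 y * f 0 z)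
        + f 2 x * (f 0 y * f 1 z - f 1 y * f 0 z) := by
  have : ι R x * (ι R y * ι R z) = ιMulti R 3 ![x, y, z] := by simp [ιMulti_apply]
  rw [this, detPairing_ιMulti, Matrix.det_fin_three]
  simp only [Matrix.of_apply, Matrix.cons_val]
  ring

theorem mem_exteriorPower_zero_iff {x : ExteriorAlgebra R M} :
    x ∈ ⋀[R]^0 M ↔ ∃ r : R, algebraMap R _ r = x := by
  change x ∈ LinearMap.range (ι R (M := M)) ^ 0 ↔ _
  rw [pow_zero, Submodule.mem_one]

theorem mem_exteriorPower_one_iff {x : ExteriorAlgebra R M} :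
    x ∈ ⋀[R]^1 M ↔ ∃ m : M, ι R m = x := by
  change x ∈ LinearMap.range (ι R (M := M)) ^ 1 ↔ _
  rw [pow_one, LinearMap.mem_range]

theorem proj_mul_mul_mem_span {S : Set (ExteriorAlgebra R M)} {d : ℕ} (hS : S ⊆ ⋀[R]^d M)
    {g : ExteriorAlgebra R M} (hg : g ∈ S) (a b : ExteriorAlgebra R M) :
    GradedRing.proj (fun i : ℕ => ⋀[R]^i M) d (a * g * b) ∈ Submodule.span R S := by
  induction a using DirectSum.Decomposition.inductionOn (ℳ := fun i : ℕ => ⋀[R]^i M) with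
  | zero => simp
  | add a a' ha ha' => rw [add_mul, add_mul, map_add]; exact add_mem ha ha'
  | @homogeneous n a =>
  induction b using DirectSum.Decomposition.inductionOn (ℳ := fun i : ℕ => ⋀[R]^i M) with
  | zero => simp
  | add b b' hb hb' => rw [mul_add, map_add]; exact add_mem hb hb'
  | @homogeneous m b =>
  have hmem : (a : ExteriorAlgebra R M) * g * b ∈ ⋀[R]^(n + d + m) M :=
    SetLike.mul_mem_graded (SetLike.mul_mem_graded a.2 (hS hg)) b.2
  rw [GradedRing.proj_apply]
  by_cases hnm : n = 0 ∧ m = 0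
  · obtain ⟨rfl, rfl⟩ := hnm
    rw [zero_add, add_zero] at hmem
    rw [DirectSum.decompose_of_mem_same (fun i : ℕ => ⋀[R]^i M) hmem]
    obtain ⟨r, hr⟩ := mem_exteriorPower_zero_iff.mp a.2
    obtain ⟨s, hs⟩ := mem_exteriorPower_zero_iff.mp b.2
    rw [← hr, ← hs, ← Algebra.commutes, ← Algebra.smul_def, ← Algebra.smul_def]
    exact Submodule.smul_mem _ _ (Submodule.smul_mem _ _ (Submodule.subset_span hg))
  · rw [DirectSum.decompose_of_mem_ne (fun i : ℕ => ⋀[R]^i M) hmem (by omega)]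
    exact zero_mem _

theorem mem_span_of_mem_twoSidedIdeal_span {S : Set (ExteriorAlgebra R M)} {d : ℕ}
    (hS : S ⊆ ⋀[R]^d M) {x : ExteriorAlgebra R M} (hx : x ∈ TwoSidedIdeal.span S)
    (hxd : x ∈ ⋀[R]^d M) : x ∈ Submodule.span R S := by
  rw [← DirectSum.decompose_of_mem_same (fun i : ℕ => ⋀[R]^i M) hxd, ← GradedRing.proj_apply]
  clear hxd
  rw [TwoSidedIdeal.mem_span_iff_mem_addSubgroup_closure] at hx
  induction hx using AddSubgroup.closure_induction with
  | mem _ h =>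
    obtain ⟨_, ⟨a, -, g, hg, rfl⟩, b, -, rfl⟩ := h
    exact proj_mul_mul_mem_span hS hg a b
  | zero => simp
  | add _ _ _ _ hy hz => rw [map_add]; exact add_mem hy hz
  | neg _ _ hy => rw [map_neg]; exact neg_mem hy

theorem exists_smul_eq_of_ι_mul_ι_eq_zero {K V : Type*} [Field K] [AddCommGroup V]
    [Module K V] {v w : V} (hv : v ≠ 0) (h : ι K v * ι K w = 0) : ∃ c : K, w = c • v := by
  obtain ⟨f, hf⟩ := Module.Projective.exists_dual_eq_one K hv
  refine ⟨f w, sub_eq_zero.mp ((Module.forall_dual_apply_eq_zero_iff K _).mp fun g => ?_)⟩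
  have := congrArg (detPairing ![f, g]) h
  rw [detPairing_ι_mul_ι, map_zero] at this
  simp only [Matrix.cons_val_zero, Matrix.cons_val_one] at this
  simp only [map_sub, map_smul, smul_eq_mul]
  linear_combination this - g w * hf

end ExteriorAlgebra

theorem resGens_subset_exteriorPower_two (k : Type) [Field k] (n : ℕ) :
    resGens k n ⊆ ⋀[k]^2 (RIdx n →₀ k) := by
  have h1 (x : RIdx n →₀ k) : ι k x ∈ ⋀[k]^1 (RIdx n →₀ k) := mem_exteriorPower_one_iff.mpr ⟨x, rfl⟩
  rintro x (⟨i, j, hij, rfl⟩ | ⟨i, j, m, hij, hmi, hmj, rfl⟩)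
  · exact SetLike.mul_mem_graded (h1 _) (h1 _)
  · exact SetLike.mul_mem_graded (sub_mem (h1 _) (h1 _)) (sub_mem (h1 _) (h1 _))

theorem resπ_notMem_resR1 {k : Type} [Field k] {n : ℕ} {a : Egen k n}
    (ha1 : a ∈ ⋀[k]^1 (RIdx n →₀ k)) (ha0 : a ≠ 0) (hinj : Function.Injective (resPsi k n a)) :
    resπ k n a ∉ resR1 k n := by
  rintro ⟨-, _, ⟨x, hx1, rfl⟩, hax, hnot⟩
  obtain ⟨v, rfl⟩ := mem_exteriorPower_one_iff.mp ha1
  obtain ⟨w, rfl⟩ := mem_exteriorPower_one_iff.mp hx1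
  have hπ : resπ k n (ι k v * ι k w) = resπ k n 0 := by
    rw [map_mul, map_zero]
    exact hax
  have hI : ι k v * ι k w ∈ resI2 k n :=
    ⟨(RingCon.eq _).mp hπ, SetLike.mul_mem_graded ha1 hx1⟩
  have hvw : ι k v * ι k w = 0 := by
    have := hinj (a₁ := ⟨_, hI⟩) (a₂ := 0) (by simp [resPsi, ← mul_assoc])
    exact congrArg Subtype.val this
  obtain ⟨c, rfl⟩ := exists_smul_eq_of_ι_mul_ι_eq_zero (fun hv => ha0 (by simp [hv])) hvw
  refine hnot ⟨resπ k n (algebraMap k _ c), ⟨_, mem_exteriorPower_zero_iff.mpr ⟨c, rfl⟩, rfl⟩, ?_⟩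
  simp [Algebra.smul_def, Algebra.commutes]

namespace PSigmaThree

def r (p q : Fin 3) (h : p ≠ q := by decide) : RIdx 3 := ⟨(p, q), h⟩

variable (k : Type) [Field k]

noncomputable def e (p q : Fin 3) (h : p ≠ q := by decide) : RIdx 3 →₀ k :=
  Finsupp.single (r p q h) 1

/-- `η₁₂, η₁₃, η₂₃, τ³₁₂, τ²₁₃, τ¹₂₃` in the paper's 1-based indexing. -/
noncomputable def gen : Fin 6 → Egen k 3 :=
  ![ι k (e k 0 1) * ι k (e k 1 0), ι k (e k 0 2) * ι k (e k 2 0), ι k (e k 1 2) * ι k (e k 2 1),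
    ι k (e k 2 0 - e k 1 0) * ι k (e k 2 1 - e k 0 1),
    ι k (e k 1 0 - e k 2 0) * ι k (e k 1 2 - e k 0 2),
    ι k (e k 0 1 - e k 2 1) * ι k (e k 0 2 - e k 1 2)]

variable {k}

theorem egen_eq (p q : Fin 3) (h : p ≠ q) : egen k p q h = ι k (e k p q h) := rfl

theorem resGens_three_subset_range_gen : resGens k 3 ⊆ Set.range (gen k) := by
  rintro x (⟨i, j, hij, rfl⟩ | ⟨i, j, m, hij, hmi, hmj, rfl⟩) <;> simp only [egen_eq, ← map_sub]
  · fin_cases i <;> fin_cases j <;>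
      first
        | exact absurd hij (by decide)
        | exact ⟨0, rfl⟩
        | exact ⟨1, rfl⟩
        | exact ⟨2, rfl⟩
  · fin_cases i <;> fin_cases j <;> fin_cases m <;>
      first
        | exact absurd hij (by decide)
        | exact absurd rfl hmi
        | exact absurd rfl hmj
        | exact ⟨3, rfl⟩
        | exact ⟨4, rfl⟩
        | exact ⟨5, rfl⟩

theorem mem_span_gen_of_mem_resI2 {x : Egen k 3} (hx : x ∈ resI2 k 3) :
    x ∈ Submodule.span k (Set.range (gen k)) :=
  Submodule.span_mono resGens_three_subset_range_gen
    (mem_span_of_mem_twoSidedIdeal_span (resGens_subset_exteriorPower_two k 3) hx.1 hx.2)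

theorem eq_sum_e (v : RIdx 3 →₀ k) :
    v = v (r 0 1) • e k 0 1 + v (r 1 0) • e k 1 0 + v (r 0 2) • e k 0 2 + v (r 2 0) • e k 2 0
      + v (r 1 2) • e k 1 2 + v (r 2 1) • e k 2 1 := by
  ext ⟨⟨p, q⟩, h⟩
  fin_cases p <;> fin_cases q <;>
    first | exact absurd rfl h | simp +decide [e, r]

theorem ι_mem_resC2E_zero_one {v : RIdx 3 →₀ k} (h02 : v (r 0 2) = 0) (h20 : v (r 2 0) = 0)
    (h12 : v (r 1 2) = 0) (h21 : v (r 2 1) = 0) : ι k v ∈ resC2E k 3 0 1 (by decide) := by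
  rw [eq_sum_e v, h02, h20, h12, h21]
  simpa [resC2E, egen_eq] using Submodule.mem_span_pair.mpr ⟨v (r 0 1), v (r 1 0), rfl⟩

theorem ι_mem_resC2E_zero_two {v : RIdx 3 →₀ k} (h01 : v (r 0 1) = 0) (h10 : v (r 1 0) = 0)
    (h12 : v (r 1 2) = 0) (h21 : v (r 2 1) = 0) : ι k v ∈ resC2E k 3 0 2 (by decide) := by
  rw [eq_sum_e v, h01, h10, h12, h21]
  simpa [resC2E, egen_eq] using Submodule.mem_span_pair.mpr ⟨v (r 0 2), v (r 2 0), rfl⟩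

theorem ι_mem_resC2E_one_two {v : RIdx 3 →₀ k} (h01 : v (r 0 1) = 0) (h10 : v (r 1 0) = 0)
    (h02 : v (r 0 2) = 0) (h20 : v (r 2 0) = 0) : ι k v ∈ resC2E k 3 1 2 (by decide) := by
  rw [eq_sum_e v, h01, h10, h02, h20]
  simpa [resC2E, egen_eq] using Submodule.mem_span_pair.mpr ⟨v (r 1 2), v (r 2 1), rfl⟩

theorem ι_mem_resC3E {v : RIdx 3 →₀ k} (h0 : v (r 0 1) + v (r 2 1) = 0)
    (h1 : v (r 1 0) + v (r 2 0) = 0) (h2 : v (r 0 2) + v (r 1 2) = 0) :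
    ι k v ∈ resC3E k 3 0 1 2 (by decide) (by decide) (by decide) := by
  have hv : v = v (r 1 0) • (e k 1 0 - e k 2 0) + v (r 0 1) • (e k 0 1 - e k 2 1)
      + v (r 0 2) • (e k 0 2 - e k 1 2) := by
    conv_lhs => rw [eq_sum_e v]
    rw [eq_neg_of_add_eq_zero_right h0, eq_neg_of_add_eq_zero_right h1,
      eq_neg_of_add_eq_zero_right h2]
    module
  rw [hv, resC3E]
  simp only [egen_eq, ← map_sub, map_add, map_smul]
  refine add_mem (add_mem ?_ ?_) ?_ <;> refine Submodule.smul_mem _ _ (Submodule.subset_span ?_)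
    <;> simp

theorem sum_detPairing_ι_mul_gen_eq_zero {v : RIdx 3 →₀ k} {c : Fin 6 → k}
    (h : ι k v * ∑ i, c i • gen k i = 0) (p q s : RIdx 3) :
    ∑ i, c i * detPairing ![Finsupp.lapply p, Finsupp.lapply q, Finsupp.lapply s]
      (ι k v * gen k i) = 0 := by
  simpa [Finset.mul_sum, map_sum] using
    congrArg (detPairing ![Finsupp.lapply p, Finsupp.lapply q, Finsupp.lapply s]) h

theorem tau_coeffs_eq_zero {v : RIdx 3 →₀ k} {c : Fin 6 → k}
    (hv : ι k v ∉ resC3E k 3 0 1 2 (by decide) (by decide) (by decide))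
    (h : ι k v * ∑ i, c i • gen k i = 0) : c 3 = 0 ∧ c 4 = 0 ∧ c 5 = 0 := by
  have d01_02_12 := sum_detPairing_ι_mul_gen_eq_zero h (r 0 1) (r 0 2) (r 1 2)
  have d01_02_21 := sum_detPairing_ι_mul_gen_eq_zero h (r 0 1) (r 0 2) (r 2 1)
  have d01_20_21 := sum_detPairing_ι_mul_gen_eq_zero h (r 0 1) (r 2 0) (r 2 1)
  have d10_02_12 := sum_detPairing_ι_mul_gen_eq_zero h (r 1 0) (r 0 2) (r 1 2)
  have d10_20_12 := sum_detPairing_ι_mul_gen_eq_zero h (r 1 0) (r 2 0) (r 1 2)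
  have d10_20_21 := sum_detPairing_ι_mul_gen_eq_zero h (r 1 0) (r 2 0) (r 2 1)
  have d10_02_21 := sum_detPairing_ι_mul_gen_eq_zero h (r 1 0) (r 0 2) (r 2 1)
  have d01_20_12 := sum_detPairing_ι_mul_gen_eq_zero h (r 0 1) (r 2 0) (r 1 2)
  simp +decide only [Fin.sum_univ_six, gen, detPairing_ι_mul_ι_mul_ι, Matrix.cons_val,
    Finsupp.lapply_apply, Finsupp.sub_apply, e, Finsupp.single_apply, if_true, if_false]
    at d01_02_12 d01_02_21 d01_20_21 d10_02_12 d10_20_12 d10_20_21 d10_02_21 d01_20_12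
  set s₀ := v (r 0 1) + v (r 2 1)
  set s₁ := v (r 1 0) + v (r 2 0)
  set s₂ := v (r 0 2) + v (r 1 2)
  have hs : ¬(s₀ = 0 ∧ s₁ = 0 ∧ s₂ = 0) := fun ⟨h0, h1, h2⟩ => hv (ι_mem_resC3E h0 h1 h2)
  have h03 : s₀ * c 3 = 0 := by linear_combination d01_20_21
  have h13 : s₁ * c 3 = 0 := by linear_combination d10_20_21
  have h14 : s₁ * c 4 = 0 := by linear_combination -d10_20_12
  have h24 : s₂ * c 4 = 0 := by linear_combination -d10_02_12
  have h05 : s₀ * c 5 = 0 := by linear_combination d01_02_21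
  have h25 : s₂ * c 5 = 0 := by linear_combination d01_02_12
  have hmix : s₀ * c 4 = s₁ * c 5 + s₂ * c 3 := by linear_combination -d10_02_21 - d01_20_12
  grind

theorem eta_coeffs_eq_zero {v : RIdx 3 →₀ k} {c : Fin 6 → k}
    (hv01 : ι k v ∉ resC2E k 3 0 1 (by decide)) (hv02 : ι k v ∉ resC2E k 3 0 2 (by decide))
    (hv12 : ι k v ∉ resC2E k 3 1 2 (by decide))
    (h : ι k v * ∑ i, c i • gen k i = 0) (hτ : c 3 = 0 ∧ c 4 = 0 ∧ c 5 = 0) :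
    c 0 = 0 ∧ c 1 = 0 ∧ c 2 = 0 := by
  obtain ⟨h3, h4, h5⟩ := hτ
  have h01_02 := sum_detPairing_ι_mul_gen_eq_zero h (r 0 1) (r 1 0) (r 0 2)
  have h01_20 := sum_detPairing_ι_mul_gen_eq_zero h (r 0 1) (r 1 0) (r 2 0)
  have h01_12 := sum_detPairing_ι_mul_gen_eq_zero h (r 0 1) (r 1 0) (r 1 2)
  have h01_21 := sum_detPairing_ι_mul_gen_eq_zero h (r 0 1) (r 1 0) (r 2 1)
  have h02_01 := sum_detPairing_ι_mul_gen_eq_zero h (r 0 1) (r 0 2) (r 2 0)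
  have h02_10 := sum_detPairing_ι_mul_gen_eq_zero h (r 1 0) (r 0 2) (r 2 0)
  have h02_12 := sum_detPairing_ι_mul_gen_eq_zero h (r 0 2) (r 2 0) (r 1 2)
  have h02_21 := sum_detPairing_ι_mul_gen_eq_zero h (r 0 2) (r 2 0) (r 2 1)
  have h12_01 := sum_detPairing_ι_mul_gen_eq_zero h (r 0 1) (r 1 2) (r 2 1)
  have h12_10 := sum_detPairing_ι_mul_gen_eq_zero h (r 1 0) (r 1 2) (r 2 1)
  have h12_02 := sum_detPairing_ι_mul_gen_eq_zero h (r 0 2) (r 1 2) (r 2 1)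
  have h12_20 := sum_detPairing_ι_mul_gen_eq_zero h (r 2 0) (r 1 2) (r 2 1)
  simp +decide only [Fin.sum_univ_six, gen, detPairing_ι_mul_ι_mul_ι, Matrix.cons_val,
    Finsupp.lapply_apply, Finsupp.sub_apply, e, Finsupp.single_apply, if_true, if_false, h3, h4,
    h5, mul_zero, zero_mul, mul_one, one_mul, sub_zero, zero_sub, add_zero, zero_add, sub_self,
    mul_eq_zero]
    at h01_02 h01_20 h01_12 h01_21 h02_01 h02_10 h02_12 h02_21 h12_01 h12_10 h12_02 h12_20
  refine ⟨?_, ?_, ?_⟩ <;> by_contra hc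
  · exact hv01 (ι_mem_resC2E_zero_one (h01_02.resolve_left hc) (h01_20.resolve_left hc)
      (h01_12.resolve_left hc) (h01_21.resolve_left hc))
  · exact hv02 (ι_mem_resC2E_zero_two (h02_01.resolve_left hc) (h02_10.resolve_left hc)
      (h02_12.resolve_left hc) (h02_21.resolve_left hc))
  · exact hv12 (ι_mem_resC2E_one_two (h12_01.resolve_left hc) (h12_10.resolve_left hc)
      (h12_02.resolve_left hc) (h12_20.resolve_left hc))

theorem resPsi_injective {v : RIdx 3 →₀ k}
    (hv01 : ι k v ∉ resC2E k 3 0 1 (by decide)) (hv02 : ι k v ∉ resC2E k 3 0 2 (by decide))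
    (hv12 : ι k v ∉ resC2E k 3 1 2 (by decide))
    (hv012 : ι k v ∉ resC3E k 3 0 1 2 (by decide) (by decide) (by decide)) :
    Function.Injective (resPsi k 3 (ι k v)) := by
  refine (injective_iff_map_eq_zero _).mpr fun x hx => ?_
  obtain ⟨c, hc⟩ := (Submodule.mem_span_range_iff_exists_fun k).mp (mem_span_gen_of_mem_resI2 x.2)
  have h : ι k v * ∑ i, c i • gen k i = 0 := hc ▸ hx
  have hτ := tau_coeffs_eq_zero hv012 h
  obtain ⟨h0, h1, h2⟩ := eta_coeffs_eq_zero hv01 hv02 hv12 h hτ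
  obtain ⟨h3, h4, h5⟩ := hτ
  ext
  simp [← hc, Fin.sum_univ_six, h0, h1, h2, h3, h4, h5]

end PSigmaThree

/-- **Case 2, n = 3.** If `a ∈ E¹` does not lie in `C_{1,2} ∪ C_{1,3} ∪ C_{2,3} ∪ C_{1,2,3}`
then `ψ_a : I² → E³` is injective; consequently `a ∉ R¹`. -/
theorem n3_psi_injective
    (k : Type) [Field k]
    (a : Egen k 3) (ha1 : a ∈ ⋀[k]^1 (RIdx 3 →₀ k))
    (ha : a ∉ ((resC2E k 3 0 1 (by decide) : Set (Egen k 3)) ∪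
          (resC2E k 3 0 2 (by decide) : Set (Egen k 3)) ∪
          (resC2E k 3 1 2 (by decide) : Set (Egen k 3)) ∪
          (resC3E k 3 0 1 2 (by decide) (by decide) (by decide) : Set (Egen k 3)))) :
    Function.Injective (resPsi k 3 a) ∧ resπ k 3 a ∉ resR1 k 3 := by
  simp only [Set.mem_union, SetLike.mem_coe, not_or] at ha
  obtain ⟨⟨⟨h01, h02⟩, h12⟩, h012⟩ := ha
  obtain ⟨v, rfl⟩ := mem_exteriorPower_one_iff.mp ha1
  have hinj := PSigmaThree.resPsi_injective h01 h02 h12 h012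
  refine ⟨hinj, resπ_notMem_resR1 ha1 ?_ hinj⟩
  rintro h0
  exact h01 (h0 ▸ zero_mem _)
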